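/- arXiv:2501.14799 — 2 statements merged into one kernel-verified Lean document; each statement's English description precedes it below -/
import Mathlib

section
/- Every abstract clone is isomorphic to a concrete clone, i.e., to the abstract clone of some clone of finitary operations on a set. -/
universe u

/-- An abstract clone: sorts `B n`, distinguished elements `e n i` and
composition operations `q n k` satisfying associativity and the unit laws. -/
structure AbstractClone (B : ℕ → Type u) where
  e : (n : ℕ) → Fin n → B n
  q : (n k : ℕ) → B n → (Fin n → B k) → B k
  assoc : ∀ (m n k : ℕ) (x : B m) (y : Fin m → B n) (z : Fin n → B k),
    q n k (q m n x y) z = q m k x (fun i => q n k (y i) z)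
  runit : ∀ (n : ℕ) (x : B n), q n n x (e n) = x
  lunit : ∀ (n k : ℕ) (i : Fin n) (y : Fin n → B k), q n k (e n i) y = y i

namespace AbstractClone

variable {B : ℕ → Type u} (𝔅 : AbstractClone B)

/-- `x^{+1} = q_n^{n+1}(x, e_0^{n+1}, …, e_{n-1}^{n+1})`. -/
def plus (x : Σ n, B n) : Σ n, B n :=
  ⟨x.1 + 1, 𝔅.q x.1 (x.1 + 1) x.2 (fun i => 𝔅.e (x.1 + 1) i.castSucc)⟩

/-- The relation whose equivalence closure is `≈`: `x ≈ x^{+1}`. -/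
def Rel (x y : Σ n, B n) : Prop := y = 𝔅.plus x

def plusIter (x : Σ n, B n) : ℕ → Σ n, B n
  | 0 => x
  | j + 1 => 𝔅.plus (plusIter x j)

theorem plusIter_fst (x : Σ n, B n) (j : ℕ) : (𝔅.plusIter x j).1 = x.1 + j := by
  induction j with
  | zero => rfl
  | succ j ih =>
    show (𝔅.plusIter x j).1 + 1 = x.1 + (j + 1)
    omega

/-- Lift an element of `B m` to any sort `B k` with `m ≤ k`. -/
def toSort (x : Σ n, B n) (k : ℕ) (h : x.1 ≤ k) : B k :=
  cast (congrArg B (by rw [𝔅.plusIter_fst, Nat.add_sub_cancel' h]))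
    (𝔅.plusIter x (k - x.1)).2

end AbstractClone

/-!
The carrier is the direct limit of the sorts along weakening `B m → B k`,
`x ↦ q x (e_0, …, e_{m-1})`, i.e. the free algebra on countably many generators. An element
`x : B n` acts on it by substitution: represent the arguments at a common level `K` and form
`q_n^K(x, a)`. Associativity makes this independent of the representatives and turns `q` into
composition of operations, the left unit law makes `e_i` act as the `i`-th projection, and
evaluating at the generators `e_0^n, …, e_{n-1}^n` recovers `x` by the right unit law, so the
action is faithful.
-/

open Function

namespace DirectLimit

variable {ι : Type*} [Preorder ι] [IsDirectedOrder ι] {F : ι → Type*}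
  {T : ∀ ⦃i j : ι⦄, i ≤ j → Type*} {f : ∀ i j (h : i ≤ j), T h}
  [∀ ⦃i j⦄ (h : i ≤ j), FunLike (T h) (F i) (F j)] [DirectedSystem F (f · · ·)]

theorem exists_eq_mk_of_finite [Nonempty ι] {α : Type*} [Finite α] (z : α → DirectLimit F f) :
    ∃ (i : ι) (x : α → F i), ∀ a, z a = ⟦⟨i, x a⟩⟧ := by
  choose j y hy using fun a => exists_eq_mk f (z a)
  obtain ⟨i, hi⟩ := Finite.exists_le j
  exact ⟨i, fun a => f _ _ (hi a) (y a), fun a => by rw [hy, mk_apply]⟩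

theorem mk_eq_mk_iff_of_injective (hf : ∀ i j h, Injective (f i j h)) {i j k : ι}
    (hi : i ≤ k) (hj : j ≤ k) (x : F i) (y : F j) :
    (⟦⟨i, x⟩⟧ : DirectLimit F f) = ⟦⟨j, y⟩⟧ ↔ f i k hi x = f j k hj y := by
  rw [← mk_apply i k x hi, ← mk_apply j k y hj]
  exact (mk_injective f hf k).eq_iff

end DirectLimit

namespace AbstractClone

variable {B : ℕ → Type u} (𝔅 : AbstractClone B)

def weaken {m k : ℕ} (h : m ≤ k) (x : B m) : B k :=
  𝔅.q m k x fun i => 𝔅.e k (Fin.castLE h i)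

theorem q_weaken {m k l : ℕ} (h : m ≤ k) (x : B m) (z : Fin k → B l) :
    𝔅.q k l (𝔅.weaken h x) z = 𝔅.q m l x fun i => z (Fin.castLE h i) := by
  simp only [weaken, 𝔅.assoc, 𝔅.lunit]

theorem weaken_q {n m k : ℕ} (h : m ≤ k) (x : B n) (y : Fin n → B m) :
    𝔅.weaken h (𝔅.q n m x y) = 𝔅.q n k x fun i => 𝔅.weaken h (y i) :=
  𝔅.assoc _ _ _ _ _ _

theorem weaken_refl {m : ℕ} (x : B m) : 𝔅.weaken le_rfl x = x :=
  𝔅.runit m x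

theorem weaken_weaken {m k l : ℕ} (h : m ≤ k) (h' : k ≤ l) (x : B m) :
    𝔅.weaken h' (𝔅.weaken h x) = 𝔅.weaken (h.trans h') x :=
  𝔅.q_weaken h x _

theorem weaken_injective {m k : ℕ} (h : m ≤ k) : Injective (𝔅.weaken h : B m → B k) := by
  intro x y hxy
  -- a retraction of `weaken h` needs some element of `B m` for the extra variables: take `x`
  let z : Fin k → B m := fun j => if hj : j.1 < m then 𝔅.e m ⟨j, hj⟩ else x
  have hz : (fun i => z (Fin.castLE h i)) = 𝔅.e m := funext fun i => dif_pos i.isLt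
  have retract : ∀ w : B m, 𝔅.q k m (𝔅.weaken h w) z = w := fun w => by
    rw [q_weaken, hz, runit]
  rw [← retract x, hxy, retract y]

def weakenEmb (m k : ℕ) (h : m ≤ k) : B m ↪ B k := ⟨𝔅.weaken h, 𝔅.weaken_injective h⟩

instance : DirectedSystem B (𝔅.weakenEmb · · ·) where
  map_self _ x := 𝔅.weaken_refl x
  map_map _ _ _ h h' x := 𝔅.weaken_weaken h h' x

abbrev Limit : Type u := DirectLimit B 𝔅.weakenEmb

theorem mk_q_eq_of_forall_mk_eq {n K L : ℕ} (x : B n) {a : Fin n → B K} {b : Fin n → B L}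
    (hab : ∀ i, (⟦⟨K, a i⟩⟧ : 𝔅.Limit) = ⟦⟨L, b i⟩⟧) :
    (⟦⟨K, 𝔅.q n K x a⟩⟧ : 𝔅.Limit) = ⟦⟨L, 𝔅.q n L x b⟩⟧ := by
  have hK : K ≤ max K L := le_max_left K L
  have hL : L ≤ max K L := le_max_right K L
  have hab' : ∀ i, 𝔅.weaken hK (a i) = 𝔅.weaken hL (b i) := fun i =>
    (DirectLimit.mk_eq_mk_iff_of_injective (fun _ _ h => (𝔅.weakenEmb _ _ h).injective)
      hK hL _ _).1 (hab i)
  rw [← DirectLimit.mk_apply K _ _ hK, ← DirectLimit.mk_apply L _ _ hL]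
  simp only [weakenEmb, Embedding.coeFn_mk, weaken_q, hab']

noncomputable def op {n : ℕ} (x : B n) (s : Fin n → 𝔅.Limit) : 𝔅.Limit :=
  ⟦⟨_, 𝔅.q n _ x (DirectLimit.exists_eq_mk_of_finite s).choose_spec.choose⟩⟧

theorem op_eq_mk {n K : ℕ} (x : B n) {s : Fin n → 𝔅.Limit} {a : Fin n → B K}
    (hs : ∀ i, s i = ⟦⟨K, a i⟩⟧) : 𝔅.op x s = ⟦⟨K, 𝔅.q n K x a⟩⟧ :=
  𝔅.mk_q_eq_of_forall_mk_eq x fun i =>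
    ((DirectLimit.exists_eq_mk_of_finite s).choose_spec.choose_spec i).symm.trans (hs i)

theorem op_e {n : ℕ} (i : Fin n) : 𝔅.op (𝔅.e n i) = fun s => s i := by
  funext s
  obtain ⟨K, a, hs⟩ := DirectLimit.exists_eq_mk_of_finite s
  rw [𝔅.op_eq_mk _ hs, 𝔅.lunit, hs]

theorem op_q {n k : ℕ} (x : B n) (y : Fin n → B k) :
    𝔅.op (𝔅.q n k x y) = fun s => 𝔅.op x fun i => 𝔅.op (y i) s := by
  funext s
  obtain ⟨K, a, hs⟩ := DirectLimit.exists_eq_mk_of_finite s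
  rw [𝔅.op_eq_mk _ hs, 𝔅.op_eq_mk x fun i => 𝔅.op_eq_mk (y i) hs, 𝔅.assoc]

theorem op_injective (n : ℕ) : Injective (𝔅.op : B n → (Fin n → 𝔅.Limit) → 𝔅.Limit) := by
  have op_generators : ∀ x : B n, 𝔅.op x (fun i => ⟦⟨n, 𝔅.e n i⟩⟧) = ⟦⟨n, x⟩⟧ := fun x => by
    rw [𝔅.op_eq_mk x fun _ => rfl, 𝔅.runit]
  intro x y hxy
  apply DirectLimit.mk_injective _ (fun _ _ h => (𝔅.weakenEmb _ _ h).injective) n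
  change (⟦⟨n, x⟩⟧ : 𝔅.Limit) = ⟦⟨n, y⟩⟧
  rw [← op_generators x, ← op_generators y, hxy]

end AbstractClone

/-- STATEMENT 1: every abstract clone is isomorphic to a concrete clone, i.e.
there is a set `A` and a clone `F` of finitary operations on `A` (containing
all projections and closed under composition) together with a family of
bijections `φ n : B n ≃ F n` commuting with the distinguished elements
(projections) and with composition. -/
theorem abstractClone_iso_concrete {B : ℕ → Type u} (𝔅 : AbstractClone B) :
    ∃ (A : Type u) (F : (n : ℕ) → Set ((Fin n → A) → A)),
      (∀ (n : ℕ) (i : Fin n), (fun x : Fin n → A => x i) ∈ F n) ∧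
      (∀ (n k : ℕ) (f : (Fin n → A) → A) (g : Fin n → ((Fin k → A) → A)),
        f ∈ F n → (∀ i, g i ∈ F k) →
        (fun x : Fin k → A => f (fun i => g i x)) ∈ F k) ∧
      ∃ φ : (n : ℕ) → B n ≃ F n,
        (∀ (n : ℕ) (i : Fin n),
          ((φ n (𝔅.e n i) : F n) : (Fin n → A) → A) = fun x => x i) ∧
        (∀ (n k : ℕ) (x : B n) (y : Fin n → B k),
          ((φ k (𝔅.q n k x y) : F k) : (Fin k → A) → A) =
            fun s => ((φ n x : F n) : (Fin n → A) → A)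
              (fun i => ((φ k (y i) : F k) : (Fin k → A) → A) s)) := by
  refine ⟨𝔅.Limit, fun n => Set.range 𝔅.op, fun n i => ⟨𝔅.e n i, 𝔅.op_e i⟩, ?_,
    fun n => Equiv.ofInjective _ (𝔅.op_injective n), fun n i => 𝔅.op_e i,
    fun n k x y => 𝔅.op_q x y⟩
  rintro n k _ g ⟨x, rfl⟩ hg
  choose y hy using hg
  obtain rfl : g = fun i => 𝔅.op (y i) := funext fun i => (hy i).symm
  exact ⟨𝔅.q n k x y, 𝔅.op_q x y⟩
end

section
/- Let A be a set and Seq(A) the fully canonical merge algebra on A. A subset X ⊆ A^ω is (the universe of) a merge subalgebra of Seq(A), i.e., closed under all operations ⋆_n and σ̄, if and only if X is a trace on some subset of A. -/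
universe u

open scoped Classical

/-- A finite permutation of ω: an element of S_ω, i.e. a permutation moving
only finitely many points. -/
def FinPerm (σ : Equiv.Perm ℕ) : Prop := {n : ℕ | σ n ≠ n}.Finite

/-- The raw operations of a merge algebra: the binary merges `⋆_n` and the
actions `σ̄` of (finite) permutations. -/
structure MergeOps (A : Type u) where
  star : ℕ → A → A → A
  bar : Equiv.Perm ℕ → A → A

namespace MergeOps

variable {A : Type u}

/-- `chain g k = ((g 0 ⋆_1 g 1) ⋆_2 g 2) … ⋆_k (g k)`. -/
def chain (M : MergeOps A) (g : ℕ → A) : ℕ → A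
  | 0 => g 0
  | i + 1 => M.star (i + 1) (M.chain g i) (g (i + 1))

/-- `chainStar g k y = ((…(g 0 ⋆_1 g 1) ⋆_2 …) ⋆_{k-1} g (k-1)) ⋆_k y`. -/
def chainStar (M : MergeOps A) (g : ℕ → A) (k : ℕ) (y : A) : A :=
  match k with
  | 0 => y
  | k + 1 => M.star (k + 1) (M.chain g k) y

/-- The `n`-coordinate of `x` relative to the coordinator `pt`:
`x[n] = τ̄^n_0(x) ⋆_1 pt`. -/
def coord (M : MergeOps A) (pt x : A) (n : ℕ) : A :=
  M.star 1 (M.bar (Equiv.swap 0 n) x) pt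

end MergeOps

/-- A merge algebra: operations `⋆_n` and `σ̄` satisfying axioms (B1)–(B7). -/
structure MergeAlgebra (A : Type u) extends MergeOps A where
  /-- (B1) each `⋆_n` is associative -/
  star_assoc : ∀ (n : ℕ) (x y z : A), star n (star n x y) z = star n x (star n y z)
  /-- (B1) each `⋆_n` is idempotent -/
  star_idem : ∀ (n : ℕ) (x : A), star n x x = x
  /-- (B2) -/
  star_zero : ∀ x y : A, star 0 x y = y
  /-- (B3), first part (k ≥ n) -/
  B3a : ∀ {n k : ℕ}, n ≤ k → ∀ x y z : A, star n (star k x y) z = star n x z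
  /-- (B3), second part (k ≥ n) -/
  B3b : ∀ {n k : ℕ}, n ≤ k → ∀ x y z : A, star k x (star n y z) = star k x z
  /-- (B4) (k < n) -/
  B4 : ∀ {n k : ℕ}, k < n → ∀ x y z : A, star n (star k x y) z = star k x (star n y z)
  /-- (B5) `σ̄(τ̄(x)) = (τ∘σ)‾(x)` -/
  B5 : ∀ σ τ : Equiv.Perm ℕ, FinPerm σ → FinPerm τ → ∀ x : A,
      bar σ (bar τ x) = bar (τ * σ) x
  /-- (B5) `ῑ(x) = x` -/
  bar_id : ∀ x : A, bar 1 x = x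
  /-- (B6): for `n ≤ k` and `σ` a permutation of `k`, with `f i = x` iff `σ i < n`:
  `σ̄(x ⋆_n y) = ((…(σ̄(f 0) ⋆_1 σ̄(f 1)) ⋆_2 …) ⋆_{k-1} σ̄(f (k-1))) ⋆_k y`. -/
  B6 : ∀ {n k : ℕ}, n ≤ k → ∀ σ : Equiv.Perm ℕ, (∀ i, k ≤ i → σ i = i) →
      ∀ x y : A, bar σ (star n x y) =
        toMergeOps.chainStar (fun i => bar σ (if σ i < n then x else y)) k y
  /-- (B7) -/
  B7 : ∀ {m n : ℕ} (σ τ : Equiv.Perm ℕ), FinPerm σ → FinPerm τ →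
      (∀ i, m ≤ i → i < n → σ i = τ i) →
      ∀ x y z : A, star n (star m z (bar σ x)) y = star n (star m z (bar τ x)) y

/-- STATEMENT 4: a subset `X ⊆ A^ω` is a merge subalgebra of the fully canonical
merge algebra `Seq(A)` (i.e. closed under all `⋆_n` and all `σ̄` for finite `σ`)
if and only if `X` is a trace on some subset `B` of `A` (i.e. `X ⊆ B^ω` and `X` is
closed under finite modifications within `B^ω`). -/
theorem merge_subalgebra_iff_trace {A : Type u} (X : Set (ℕ → A)) :
    ((∀ n : ℕ, ∀ s ∈ X, ∀ u ∈ X, (fun i => if i < n then s i else u i) ∈ X) ∧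
      (∀ σ : Equiv.Perm ℕ, FinPerm σ → ∀ s ∈ X, (fun i => s (σ i)) ∈ X)) ↔
    (∃ B : Set A,
      (∀ s ∈ X, ∀ i, s i ∈ B) ∧
      (∀ s ∈ X, ∀ r : ℕ → A, (∀ i, r i ∈ B) → {i | s i ≠ r i}.Finite → r ∈ X)) := by
  constructor
  · rintro ⟨hstar, hbar⟩
    refine ⟨{a | ∃ s ∈ X, ∃ i, s i = a}, fun s hs i => ⟨s, hs, i, rfl⟩, ?_⟩
    have hswap : ∀ j : ℕ, FinPerm (Equiv.swap 0 j) := by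
      intro j
      apply Set.Finite.subset ((Set.finite_singleton j).insert 0)
      intro n hn
      simp only [Set.mem_setOf_eq] at hn
      by_contra h
      simp only [Set.mem_insert_iff, Set.mem_singleton_iff, not_or] at h
      exact hn (Equiv.swap_apply_of_ne_of_ne h.1 h.2)
    -- one-step replacement lemma
    have one : ∀ s ∈ X, ∀ j : ℕ, ∀ a : A, (∃ t ∈ X, ∃ k, t k = a) →
        (fun i => if i = j then a else s i) ∈ X := by
      rintro s hs j a ⟨t, ht, k, rfl⟩
      have hu : (fun i => t (Equiv.swap 0 k i)) ∈ X := hbar _ (hswap k) t ht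
      set u : ℕ → A := fun i => t (Equiv.swap 0 k i) with hu_def
      have hu0 : u 0 = t k := by simp [hu_def]
      have hs' : (fun i => s (Equiv.swap 0 j i)) ∈ X := hbar _ (hswap j) s hs
      set s' : ℕ → A := fun i => s (Equiv.swap 0 j i) with hs'_def
      have hw : (fun i => if i < 1 then u i else s' i) ∈ X := hstar 1 u hu s' hs'
      set w : ℕ → A := fun i => if i < 1 then u i else s' i with hw_def
      have hw' : (fun i => w (Equiv.swap 0 j i)) ∈ X := hbar _ (hswap j) w hw
      convert hw' using 1
      funext i
      by_cases hij : i = j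
      · subst hij
        by_cases hi0 : i = 0
        · subst hi0; simp [hw_def, hu0]
        · simp [Equiv.swap_apply_right, hw_def, hu0]
      · by_cases hi0 : i = 0
        · subst hi0
          have hj0 : j ≠ 0 := fun h => hij h.symm
          have : ¬ j < 1 := by omega
          simp [Equiv.swap_apply_left, hw_def, hs'_def, this, Equiv.swap_apply_right,
            if_neg hij, hj0]
        · have hsw : Equiv.swap 0 j i = i :=
            Equiv.swap_apply_of_ne_of_ne hi0 hij
          have : ¬ i < 1 := by omega
          simp [hsw, hw_def, hs'_def, this, if_neg hij, hi0]
    have key : ∀ (F : Finset ℕ) (s : ℕ → A), s ∈ X → ∀ r : ℕ → A,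
        (∀ i, ∃ t ∈ X, ∃ k, t k = r i) → (∀ i, i ∉ F → s i = r i) → r ∈ X := by
      intro F
      induction F using Finset.induction_on with
      | empty =>
        intro s hs r _ hagree
        have : s = r := funext fun i => hagree i (Finset.notMem_empty i)
        exact this ▸ hs
      | @insert j F' hj ih =>
        intro s hs r hr hagree
        have hs1 : (fun i => if i = j then r j else s i) ∈ X := one s hs j (r j) (hr j)
        refine ih _ hs1 r hr ?_
        intro i hi
        by_cases hij : i = j
        · subst hij; simp
        · have : i ∉ insert j F' := by simp [hij, hi]
          simp [hij, hagree i this]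
    intro s hs r hr hfin
    exact key hfin.toFinset s hs r hr (fun i hi => by
      by_contra h
      exact hi (hfin.mem_toFinset.2 h))
  · rintro ⟨B, hB, hmod⟩
    constructor
    · intro n s hs u hu
      refine hmod u hu _ (fun i => ?_) ?_
      · by_cases h : i < n
        · simpa [h] using hB s hs i
        · simpa [h] using hB u hu i
      · apply Set.Finite.subset (Set.finite_Iio n)
        intro i hi
        simp only [Set.mem_setOf_eq] at hi
        by_contra h
        simp only [Set.mem_Iio, not_lt] at h
        exact hi (by simp [Nat.not_lt.2 h])
    · intro σ hσ s hs
      refine hmod s hs _ (fun i => hB s hs (σ i)) ?_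
      apply Set.Finite.subset hσ
      intro i hi
      simp only [Set.mem_setOf_eq] at hi ⊢
      intro h
      exact hi (by rw [h])
end
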